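/- Let 0 ≤ t < T, let {φ_j}_{j=0}^∞ be an arbitrary complete orthonormal system of L²([t,T],ℝ), and let ψ_i(τ) = (τ − t)^{l_i} with l_i ∈ ℕ ∪ {0} for i = 1, 2, 3. Then lim_{p→∞} Σ_{j₂=0}^p ( Σ_{j=0}^p C_{j j₂ j} )² = 0. -/

import Mathlib

open MeasureTheory Filter Finset Set

/-!
Swapping the order of integration turns `∑_{j ≤ p} C_{j j₂ j}` into the `j₂`-th Fourier
coefficient of `G_p(s) = ψ₂(s) ∑_{j ≤ p} A_j(s) B_j(s)`, where `A_j(s) = ∫_t^s ψ₁ φ_j` and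
`B_j(s) = ∫_s^T ψ₃ φ_j` are the Fourier coefficients of `1_{[t,s]} ψ₁` and `1_{(s,T]} ψ₃`.
By Bessel's inequality the sum in question is at most `‖G_p‖²`. The two functions
`1_{[t,s]} ψ₁` and `1_{(s,T]} ψ₃` are orthogonal, so Parseval's identity gives `G_p(s) → 0` for
every `s`, while Cauchy–Schwarz and Bessel bound `G_p` uniformly; dominated convergence
concludes.
-/

section OrthonormalSystem

variable {α : Type*} [MeasurableSpace α] {μ : Measure α} {φ : ℕ → α → ℝ}

theorem MeasureTheory.MemLp.inner_toLp_toLp {f g : α → ℝ} (hf : MemLp f 2 μ)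
    (hg : MemLp g 2 μ) : inner ℝ (hf.toLp f) (hg.toLp g) = ∫ x, f x * g x ∂μ := by
  rw [L2.inner_def]
  refine integral_congr_ae ?_
  filter_upwards [hf.coeFn_toLp, hg.coeFn_toLp] with x hfx hgx
  rw [hfx, hgx, RCLike.inner_apply, conj_trivial, mul_comm]

theorem orthonormal_toLp (hφ_mem : ∀ j, MemLp (φ j) 2 μ)
    (hφ_on : ∀ i j, ∫ x, φ i x * φ j x ∂μ = if i = j then 1 else 0) :
    Orthonormal ℝ fun j => (hφ_mem j).toLp (φ j) := by
  rw [orthonormal_iff_ite]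
  intro i j
  rw [MemLp.inner_toLp_toLp, hφ_on]

theorem orthogonal_span_range_toLp_eq_bot (hφ_mem : ∀ j, MemLp (φ j) 2 μ)
    (hφ_complete : ∀ f : α → ℝ, MemLp f 2 μ → (∀ j, ∫ x, f x * φ j x ∂μ = 0) → f =ᵐ[μ] 0) :
    (Submodule.span ℝ (Set.range fun j => (hφ_mem j).toLp (φ j)))ᗮ = ⊥ := by
  refine (Submodule.eq_bot_iff _).2 fun u hu => ?_
  rw [Submodule.mem_orthogonal'] at hu
  refine Lp.eq_zero_iff_ae_eq_zero.2 (hφ_complete u (Lp.memLp u) fun j => ?_)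
  rw [← MemLp.inner_toLp_toLp (Lp.memLp u) (hφ_mem j), Lp.toLp_coeFn]
  exact hu _ (Submodule.subset_span ⟨j, rfl⟩)

theorem sum_sq_integral_mul_le_integral_sq (hφ_mem : ∀ j, MemLp (φ j) 2 μ)
    (hφ_on : ∀ i j, ∫ x, φ i x * φ j x ∂μ = if i = j then 1 else 0)
    {f : α → ℝ} (hf : MemLp f 2 μ) (s : Finset ℕ) :
    ∑ j ∈ s, (∫ x, f x * φ j x ∂μ) ^ 2 ≤ ∫ x, f x ^ 2 ∂μ := by
  have := (orthonormal_toLp hφ_mem hφ_on).sum_inner_products_le (x := hf.toLp f) (s := s)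
  simp only [MemLp.inner_toLp_toLp, ← real_inner_self_eq_norm_sq, Real.norm_eq_abs, sq_abs] at this
  simpa only [mul_comm, sq] using this

theorem hasSum_integral_mul_mul_integral_mul (hφ_mem : ∀ j, MemLp (φ j) 2 μ)
    (hφ_on : ∀ i j, ∫ x, φ i x * φ j x ∂μ = if i = j then 1 else 0)
    (hφ_complete : ∀ f : α → ℝ, MemLp f 2 μ → (∀ j, ∫ x, f x * φ j x ∂μ = 0) → f =ᵐ[μ] 0)
    {f g : α → ℝ} (hf : MemLp f 2 μ) (hg : MemLp g 2 μ) :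
    HasSum (fun j => (∫ x, f x * φ j x ∂μ) * ∫ x, g x * φ j x ∂μ) (∫ x, f x * g x ∂μ) := by
  let b := HilbertBasis.mkOfOrthogonalEqBot (orthonormal_toLp hφ_mem hφ_on)
    (orthogonal_span_range_toLp_eq_bot hφ_mem hφ_complete)
  have := b.hasSum_inner_mul_inner (hf.toLp f) (hg.toLp g)
  simp only [b, HilbertBasis.coe_mkOfOrthogonalEqBot, MemLp.inner_toLp_toLp] at this
  simpa only [mul_comm (φ _ _)] using this

theorem sq_sum_integral_mul_mul_integral_mul_le (hφ_mem : ∀ j, MemLp (φ j) 2 μ)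
    (hφ_on : ∀ i j, ∫ x, φ i x * φ j x ∂μ = if i = j then 1 else 0)
    {f g : α → ℝ} (hf : MemLp f 2 μ) (hg : MemLp g 2 μ) (s : Finset ℕ) :
    (∑ j ∈ s, (∫ x, f x * φ j x ∂μ) * ∫ x, g x * φ j x ∂μ) ^ 2
      ≤ (∫ x, f x ^ 2 ∂μ) * ∫ x, g x ^ 2 ∂μ :=
  (sum_mul_sq_le_sq_mul_sq _ _ _).trans <| mul_le_mul
    (sum_sq_integral_mul_le_integral_sq hφ_mem hφ_on hf s)
    (sum_sq_integral_mul_le_integral_sq hφ_mem hφ_on hg s)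
    (sum_nonneg fun _ _ => sq_nonneg _) (integral_nonneg fun _ => sq_nonneg _)

theorem integral_indicator_sq_le {f : α → ℝ} (hf : Integrable (fun x => f x ^ 2) μ) (S : Set α) :
    ∫ x, S.indicator f x ^ 2 ∂μ ≤ ∫ x, f x ^ 2 ∂μ := by
  refine integral_mono_of_nonneg (Eventually.of_forall fun _ => sq_nonneg _) hf
    (Eventually.of_forall fun x => ?_)
  by_cases hx : x ∈ S <;> simp [hx, sq_nonneg]

end OrthonormalSystem

theorem setIntegral_Icc_indicator_eq_intervalIntegral {a b c d : ℝ} {S : Set ℝ}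
    (hS : MeasurableSet S) (hSab : (S ∩ Icc a b : Set ℝ) =ᵐ[volume] (Ioc c d : Set ℝ))
    (hcd : c ≤ d) (f : ℝ → ℝ) :
    ∫ x in Icc a b, S.indicator f x = ∫ x in c..d, f x := by
  rw [integral_indicator hS, Measure.restrict_restrict hS, Measure.restrict_congr_set hSab,
    intervalIntegral.integral_of_le hcd]

theorem Iic_inter_Icc_ae_eq_Ioc {a b x : ℝ} (hxb : x ≤ b) :
    (Iic x ∩ Icc a b : Set ℝ) =ᵐ[volume] (Ioc a x : Set ℝ) := by
  have : Iic x ∩ Icc a b = Icc a x := by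
    ext y
    simp only [mem_inter_iff, Set.mem_Iic, Set.mem_Icc]
    exact ⟨fun h => ⟨h.2.1, h.1⟩, fun h => ⟨h.2, h.1, h.2.trans hxb⟩⟩
  rw [this]
  exact Ioc_ae_eq_Icc.symm

theorem Ici_inter_Icc_ae_eq_Ioc {a b y : ℝ} (hay : a ≤ y) :
    (Ici y ∩ Icc a b : Set ℝ) =ᵐ[volume] (Ioc y b : Set ℝ) := by
  have : Ici y ∩ Icc a b = Icc y b := by
    ext x
    simp only [mem_inter_iff, Set.mem_Ici, Set.mem_Icc]
    exact ⟨fun h => ⟨h.1, h.2.2⟩, fun h => ⟨h.1, hay.trans h.1, h.2⟩⟩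
  rw [this]
  exact Ioc_ae_eq_Icc.symm

theorem intervalIntegral_mul_intervalIntegral_swap {a b : ℝ} (hab : a ≤ b) {f g : ℝ → ℝ}
    (hf : IntegrableOn f (Icc a b)) (hg : IntegrableOn g (Icc a b)) :
    ∫ x in a..b, f x * ∫ y in a..x, g y = ∫ y in a..b, g y * ∫ x in y..b, f x := by
  set H : ℝ × ℝ → ℝ := {q | q.2 ≤ q.1}.indicator fun q => f q.1 * g q.2
  have hH : Integrable H ((volume.restrict (Icc a b)).prod (volume.restrict (Icc a b))) :=
    (hf.integrable.mul_prod hg.integrable).indicator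
      (measurableSet_le measurable_snd measurable_fst)
  have hleft : ∫ x in a..b, f x * ∫ y in a..x, g y = ∫ x in Icc a b, ∫ y in Icc a b, H (x, y) := by
    rw [intervalIntegral.integral_of_le hab, ← integral_Icc_eq_integral_Ioc]
    refine setIntegral_congr_fun measurableSet_Icc fun x hx => ?_
    have : (fun y => H (x, y)) = (Iic x).indicator fun y => f x * g y := by
      ext y; simp [H, indicator_apply]
    simp only [this, setIntegral_Icc_indicator_eq_intervalIntegral measurableSet_Iic
      (Iic_inter_Icc_ae_eq_Ioc hx.2) hx.1, intervalIntegral.integral_const_mul]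
  have hright : ∫ y in a..b, g y * ∫ x in y..b, f x = ∫ y in Icc a b, ∫ x in Icc a b, H (x, y) := by
    rw [intervalIntegral.integral_of_le hab, ← integral_Icc_eq_integral_Ioc]
    refine setIntegral_congr_fun measurableSet_Icc fun y hy => ?_
    have : (fun x => H (x, y)) = (Ici y).indicator fun x => g y * f x := by
      ext x; simp [H, indicator_apply, mul_comm]
    simp only [this, setIntegral_Icc_indicator_eq_intervalIntegral measurableSet_Ici
      (Ici_inter_Icc_ae_eq_Ioc hy.1) hy.2, intervalIntegral.integral_const_mul]
  rw [hleft, hright, integral_integral_swap (f := fun x y => H (x, y)) hH]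

theorem ContinuousOn.memLp_restrict_Icc {a b : ℝ} {f : ℝ → ℝ} (hf : ContinuousOn f (Icc a b))
    (p : ENNReal) : MemLp f p (volume.restrict (Icc a b)) := by
  obtain ⟨C, hC⟩ := isCompact_Icc.exists_bound_of_continuousOn hf
  exact MemLp.of_bound (hf.aestronglyMeasurable measurableSet_Icc) C
    (ae_restrict_of_forall_mem measurableSet_Icc hC)

theorem continuousOn_intervalIntegral_mul_intervalIntegral {a b : ℝ} (hab : a ≤ b) {f g : ℝ → ℝ}
    (hf : IntegrableOn f (Icc a b)) (hg : IntegrableOn g (Icc a b)) :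
    ContinuousOn (fun s => (∫ x in a..s, f x) * ∫ x in s..b, g x) (Icc a b) := by
  rw [← uIcc_of_le hab] at hf hg ⊢
  exact (intervalIntegral.continuousOn_primitive_interval hf).mul
    (intervalIntegral.continuousOn_primitive_interval_left hg)

theorem ContinuousOn.integrableOn_mul_of_memLp {a b : ℝ} {ψ f : ℝ → ℝ}
    (hψ : ContinuousOn ψ (Icc a b)) (hf : MemLp f 2 (volume.restrict (Icc a b))) :
    IntegrableOn (fun x => ψ x * f x) (Icc a b) :=
  IntegrableOn.continuousOn_mul hψ (hf.integrable one_le_two) isCompact_Icc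

theorem iteratedIntegral_eq_integral_mul_primitives {a b : ℝ} (hab : a ≤ b) {f₁ f₂ f₃ : ℝ → ℝ}
    (hf₁ : IntegrableOn f₁ (Icc a b)) (hf₂ : IntegrableOn f₂ (Icc a b))
    (hf₃ : IntegrableOn f₃ (Icc a b)) :
    ∫ x₃ in a..b, f₃ x₃ * ∫ x₂ in a..x₃, f₂ x₂ * ∫ x₁ in a..x₂, f₁ x₁
      = ∫ s in a..b, f₂ s * ((∫ x in a..s, f₁ x) * ∫ x in s..b, f₃ x) := by
  have hF₁ : ContinuousOn (fun s => ∫ x in a..s, f₁ x) (Icc a b) := by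
    rw [← uIcc_of_le hab] at hf₁ ⊢
    exact intervalIntegral.continuousOn_primitive_interval hf₁
  rw [intervalIntegral_mul_intervalIntegral_swap hab hf₃
    (hf₂.mul_continuousOn hF₁ isCompact_Icc)]
  simp only [mul_assoc]

section FourierCoefficients

variable {t T : ℝ} {φ : ℕ → ℝ → ℝ}

theorem intervalIntegral_mul_eq_integral_indicator_Iic {ψ f : ℝ → ℝ} {s : ℝ} (hs : s ∈ Icc t T) :
    ∫ x in t..s, ψ x * f x = ∫ x in Icc t T, (Iic s).indicator ψ x * f x := by
  simp only [← indicator_mul_left]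
  exact (setIntegral_Icc_indicator_eq_intervalIntegral measurableSet_Iic
    (Iic_inter_Icc_ae_eq_Ioc hs.2) hs.1 _).symm

theorem intervalIntegral_mul_eq_integral_indicator_Ioi {ψ f : ℝ → ℝ} {s : ℝ} (hs : s ∈ Icc t T) :
    ∫ x in s..T, ψ x * f x = ∫ x in Icc t T, (Ioi s).indicator ψ x * f x := by
  have : Ioi s ∩ Icc t T = Ioc s T := by
    ext x
    simp only [mem_inter_iff, Set.mem_Ioi, Set.mem_Icc, Set.mem_Ioc]
    exact ⟨fun h => ⟨h.1, h.2.2⟩, fun h => ⟨h.1, hs.1.trans h.1.le, h.2⟩⟩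
  simp only [← indicator_mul_left]
  exact (setIntegral_Icc_indicator_eq_intervalIntegral measurableSet_Ioi
    (by rw [this]; exact EventuallyEq.rfl) hs.2 _).symm

theorem tendsto_sum_primitive_mul_primitive
    (hφ_mem : ∀ j, MemLp (φ j) 2 (volume.restrict (Icc t T)))
    (hφ_on : ∀ i j, ∫ x in Icc t T, φ i x * φ j x = if i = j then 1 else 0)
    (hφ_complete : ∀ f : ℝ → ℝ, MemLp f 2 (volume.restrict (Icc t T)) →
      (∀ j, ∫ x in Icc t T, f x * φ j x = 0) → f =ᵐ[volume.restrict (Icc t T)] 0)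
    {ψ₁ ψ₃ : ℝ → ℝ} (hψ₁ : ContinuousOn ψ₁ (Icc t T)) (hψ₃ : ContinuousOn ψ₃ (Icc t T))
    {s : ℝ} (hs : s ∈ Icc t T) :
    Tendsto (fun n => ∑ j ∈ range n,
      (∫ x in t..s, ψ₁ x * φ j x) * ∫ x in s..T, ψ₃ x * φ j x) atTop (nhds 0) := by
  have horth : ∫ x in Icc t T, (Iic s).indicator ψ₁ x * (Ioi s).indicator ψ₃ x = 0 := by
    refine integral_eq_zero_of_ae (Eventually.of_forall fun x => ?_)
    by_cases hx : x ≤ s <;> simp [hx]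
  have := hasSum_integral_mul_mul_integral_mul hφ_mem hφ_on hφ_complete
    ((hψ₁.memLp_restrict_Icc 2).indicator (measurableSet_Iic (a := s)))
    ((hψ₃.memLp_restrict_Icc 2).indicator (measurableSet_Ioi (a := s)))
  rw [horth] at this
  simpa only [intervalIntegral_mul_eq_integral_indicator_Iic hs,
    intervalIntegral_mul_eq_integral_indicator_Ioi hs] using this.tendsto_sum_nat

theorem sq_sum_primitive_mul_primitive_le
    (hφ_mem : ∀ j, MemLp (φ j) 2 (volume.restrict (Icc t T)))
    (hφ_on : ∀ i j, ∫ x in Icc t T, φ i x * φ j x = if i = j then 1 else 0)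
    {ψ₁ ψ₃ : ℝ → ℝ} (hψ₁ : ContinuousOn ψ₁ (Icc t T)) (hψ₃ : ContinuousOn ψ₃ (Icc t T))
    {s : ℝ} (hs : s ∈ Icc t T) (S : Finset ℕ) :
    (∑ j ∈ S, (∫ x in t..s, ψ₁ x * φ j x) * ∫ x in s..T, ψ₃ x * φ j x) ^ 2
      ≤ (∫ x in Icc t T, ψ₁ x ^ 2) * ∫ x in Icc t T, ψ₃ x ^ 2 := by
  simp only [intervalIntegral_mul_eq_integral_indicator_Iic hs,
    intervalIntegral_mul_eq_integral_indicator_Ioi hs]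
  refine (sq_sum_integral_mul_mul_integral_mul_le hφ_mem hφ_on
    ((hψ₁.memLp_restrict_Icc 2).indicator (measurableSet_Iic (a := s)))
    ((hψ₃.memLp_restrict_Icc 2).indicator (measurableSet_Ioi (a := s))) S).trans ?_
  exact mul_le_mul (integral_indicator_sq_le ((hψ₁.memLp_restrict_Icc 2).integrable_sq) _)
    (integral_indicator_sq_le ((hψ₃.memLp_restrict_Icc 2).integrable_sq) _)
    (integral_nonneg fun _ => sq_nonneg _) (integral_nonneg fun _ => sq_nonneg _)

theorem tendsto_integral_sq_mul_sum_primitive_mul_primitive (htT : t ≤ T)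
    (hφ_mem : ∀ j, MemLp (φ j) 2 (volume.restrict (Icc t T)))
    (hφ_on : ∀ i j, ∫ x in Icc t T, φ i x * φ j x = if i = j then 1 else 0)
    (hφ_complete : ∀ f : ℝ → ℝ, MemLp f 2 (volume.restrict (Icc t T)) →
      (∀ j, ∫ x in Icc t T, f x * φ j x = 0) → f =ᵐ[volume.restrict (Icc t T)] 0)
    {ψ₁ ψ₂ ψ₃ : ℝ → ℝ} (hψ₁ : ContinuousOn ψ₁ (Icc t T)) (hψ₂ : ContinuousOn ψ₂ (Icc t T))
    (hψ₃ : ContinuousOn ψ₃ (Icc t T)) :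
    Tendsto (fun p => ∫ s in Icc t T, (ψ₂ s * ∑ j ∈ range (p + 1),
      (∫ x in t..s, ψ₁ x * φ j x) * ∫ x in s..T, ψ₃ x * φ j x) ^ 2) atTop (nhds 0) := by
  obtain ⟨M, hM⟩ := isCompact_Icc.exists_bound_of_continuousOn hψ₂
  have hbound : ∀ p, ∀ s ∈ Icc t T, ‖(ψ₂ s * ∑ j ∈ range (p + 1),
      (∫ x in t..s, ψ₁ x * φ j x) * ∫ x in s..T, ψ₃ x * φ j x) ^ 2‖
        ≤ M ^ 2 * ((∫ x in Icc t T, ψ₁ x ^ 2) * ∫ x in Icc t T, ψ₃ x ^ 2) := by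
    intro p s hs
    rw [norm_pow, norm_mul, mul_pow, Real.norm_eq_abs (∑ j ∈ _, _), sq_abs]
    exact mul_le_mul (pow_le_pow_left₀ (norm_nonneg _) (hM s hs) 2)
      (sq_sum_primitive_mul_primitive_le hφ_mem hφ_on hψ₁ hψ₃ hs _) (sq_nonneg _) (sq_nonneg _)
  have hlim : ∀ s ∈ Icc t T, Tendsto (fun p => (ψ₂ s * ∑ j ∈ range (p + 1),
      (∫ x in t..s, ψ₁ x * φ j x) * ∫ x in s..T, ψ₃ x * φ j x) ^ 2) atTop (nhds 0) := by
    intro s hs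
    simpa using (((tendsto_sum_primitive_mul_primitive hφ_mem hφ_on hφ_complete hψ₁ hψ₃ hs).comp
      (tendsto_add_atTop_nat 1)).const_mul (ψ₂ s)).pow 2
  simpa using tendsto_integral_of_dominated_convergence _
    (fun p => ((hψ₂.mul (continuousOn_finsetSum _ fun j _ =>
      continuousOn_intervalIntegral_mul_intervalIntegral htT (hψ₁.integrableOn_mul_of_memLp
        (hφ_mem j)) (hψ₃.integrableOn_mul_of_memLp (hφ_mem j)))).pow 2).aestronglyMeasurable
          measurableSet_Icc) (integrable_const _)
    (fun p => ae_restrict_of_forall_mem measurableSet_Icc (hbound p))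
    (ae_restrict_of_forall_mem measurableSet_Icc hlim)

theorem tendsto_sum_sq_sum_coeff_diag (htT : t ≤ T)
    (hφ_mem : ∀ j, MemLp (φ j) 2 (volume.restrict (Icc t T)))
    (hφ_on : ∀ i j, ∫ x in Icc t T, φ i x * φ j x = if i = j then 1 else 0)
    (hφ_complete : ∀ f : ℝ → ℝ, MemLp f 2 (volume.restrict (Icc t T)) →
      (∀ j, ∫ x in Icc t T, f x * φ j x = 0) → f =ᵐ[volume.restrict (Icc t T)] 0)
    {ψ₁ ψ₂ ψ₃ : ℝ → ℝ} (hψ₁ : ContinuousOn ψ₁ (Icc t T)) (hψ₂ : ContinuousOn ψ₂ (Icc t T))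
    (hψ₃ : ContinuousOn ψ₃ (Icc t T)) {C : ℕ → ℕ → ℕ → ℝ}
    (hC : ∀ j₃ j₂ j₁, C j₃ j₂ j₁ =
      ∫ t₃ in t..T, ψ₃ t₃ * φ j₃ t₃ *
        ∫ t₂ in t..t₃, ψ₂ t₂ * φ j₂ t₂ * ∫ t₁ in t..t₂, ψ₁ t₁ * φ j₁ t₁) :
    Tendsto (fun p => ∑ j₂ ∈ range (p + 1), (∑ j ∈ range (p + 1), C j j₂ j) ^ 2)
      atTop (nhds 0) := by
  set AB : ℕ → ℝ → ℝ := fun j s =>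
    (∫ x in t..s, ψ₁ x * φ j x) * ∫ x in s..T, ψ₃ x * φ j x
  have hAB : ∀ j, ContinuousOn (AB j) (Icc t T) := fun j =>
    continuousOn_intervalIntegral_mul_intervalIntegral htT
      (hψ₁.integrableOn_mul_of_memLp (hφ_mem j)) (hψ₃.integrableOn_mul_of_memLp (hφ_mem j))
  have hcoeff : ∀ p j₂, ∑ j ∈ range (p + 1), C j j₂ j
      = ∫ s in Icc t T, (ψ₂ s * ∑ j ∈ range (p + 1), AB j s) * φ j₂ s := by
    intro p j₂
    simp only [hC, iteratedIntegral_eq_integral_mul_primitives htT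
      (hψ₁.integrableOn_mul_of_memLp (hφ_mem _)) (hψ₂.integrableOn_mul_of_memLp (hφ_mem _))
      (hψ₃.integrableOn_mul_of_memLp (hφ_mem _))]
    rw [← intervalIntegral.integral_finsetSum fun j _ =>
      (intervalIntegrable_iff_integrableOn_Icc_of_le htT).2
        ((hψ₂.integrableOn_mul_of_memLp (hφ_mem j₂)).mul_continuousOn (hAB j) isCompact_Icc),
      intervalIntegral.integral_of_le htT, ← integral_Icc_eq_integral_Ioc]
    simp only [sum_mul, mul_sum]
    exact integral_congr_ae (Eventually.of_forall fun s => sum_congr rfl fun j _ => by ring)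
  refine squeeze_zero (fun p => sum_nonneg fun _ _ => sq_nonneg _) (fun p => ?_)
    (tendsto_integral_sq_mul_sum_primitive_mul_primitive htT hφ_mem hφ_on hφ_complete hψ₁ hψ₂ hψ₃)
  simp only [hcoeff]
  exact sum_sq_integral_mul_le_integral_sq hφ_mem hφ_on
    ((hψ₂.mul (continuousOn_finsetSum _ fun j _ => hAB j)).memLp_restrict_Icc 2) _

end FourierCoefficients

theorem stmt9_general
    (t T : ℝ) (htT : t < T)
    (φ : ℕ → ℝ → ℝ)
    (hφ_mem : ∀ j, MemLp (φ j) 2 (volume.restrict (Set.Icc t T)))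
    (hφ_on : ∀ i j, (∫ x in Set.Icc t T, φ i x * φ j x) = if i = j then (1 : ℝ) else 0)
    (hφ_complete : ∀ f : ℝ → ℝ, MemLp f 2 (volume.restrict (Set.Icc t T)) →
      (∀ j, (∫ x in Set.Icc t T, f x * φ j x) = 0) →
      f =ᵐ[volume.restrict (Set.Icc t T)] 0)
    (l₁ l₂ l₃ : ℕ) (ψ₁ ψ₂ ψ₃ : ℝ → ℝ)
    (hψ₁ : ψ₁ = fun τ => (τ - t) ^ l₁)
    (hψ₂ : ψ₂ = fun τ => (τ - t) ^ l₂)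
    (hψ₃ : ψ₃ = fun τ => (τ - t) ^ l₃)
    (C : ℕ → ℕ → ℕ → ℝ)
    (hC : ∀ j₃ j₂ j₁, C j₃ j₂ j₁ =
      ∫ t₃ in t..T, ψ₃ t₃ * φ j₃ t₃ *
        ∫ t₂ in t..t₃, ψ₂ t₂ * φ j₂ t₂ *
          ∫ t₁ in t..t₂, ψ₁ t₁ * φ j₁ t₁) :
    Tendsto
      (fun p => ∑ j₂ ∈ Finset.range (p + 1),
        (∑ j ∈ Finset.range (p + 1), C j j₂ j) ^ 2)
      atTop (nhds 0) := by
  subst hψ₁ hψ₂ hψ₃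
  exact tendsto_sum_sq_sum_coeff_diag htT.le hφ_mem hφ_on hφ_complete
    (by fun_prop) (by fun_prop) (by fun_prop) hC

/-- condition (july700000) for k = 3, r = 1, non-adjacent pair {1,3},
for power weight functions `ψᵢ(τ) = (τ − t)^{lᵢ}` and an arbitrary CONS:
`lim_{p→∞} Σ_{j₂=0}^p (Σ_{j=0}^p C_{j j₂ j})² = 0`. -/
theorem stmt9
    (t T : ℝ) (ht : 0 ≤ t) (htT : t < T)
    (φ : ℕ → ℝ → ℝ)
    (hφ_mem : ∀ j, MemLp (φ j) 2 (volume.restrict (Set.Icc t T)))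
    (hφ_on : ∀ i j, (∫ x in Set.Icc t T, φ i x * φ j x) = if i = j then (1 : ℝ) else 0)
    (hφ_complete : ∀ f : ℝ → ℝ, MemLp f 2 (volume.restrict (Set.Icc t T)) →
      (∀ j, (∫ x in Set.Icc t T, f x * φ j x) = 0) →
      f =ᵐ[volume.restrict (Set.Icc t T)] 0)
    (l₁ l₂ l₃ : ℕ) (ψ₁ ψ₂ ψ₃ : ℝ → ℝ)
    (hψ₁ : ψ₁ = fun τ => (τ - t) ^ l₁)
    (hψ₂ : ψ₂ = fun τ => (τ - t) ^ l₂)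
    (hψ₃ : ψ₃ = fun τ => (τ - t) ^ l₃)
    (C : ℕ → ℕ → ℕ → ℝ)
    (hC : ∀ j₃ j₂ j₁, C j₃ j₂ j₁ =
      ∫ t₃ in t..T, ψ₃ t₃ * φ j₃ t₃ *
        ∫ t₂ in t..t₃, ψ₂ t₂ * φ j₂ t₂ *
          ∫ t₁ in t..t₂, ψ₁ t₁ * φ j₁ t₁) :
    Tendsto
      (fun p => ∑ j₂ ∈ Finset.range (p + 1),
        (∑ j ∈ Finset.range (p + 1), C j j₂ j) ^ 2)
      atTop (nhds 0) :=
  stmt9_general t T htT φ hφ_mem hφ_on hφ_complete l₁ l₂ l₃ ψ₁ ψ₂ ψ₃ hψ₁ hψ₂ hψ₃ C hC
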